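/- arXiv:1102.5633 — 3 statements merged into one kernel-verified Lean document; each statement's English description precedes it below -/
import Mathlib

section
/- Let X, X_1, …, X_n be i.i.d. random vectors uniformly distributed on [0,1]^d, and for each point x let X_{1,x},…,X_{n,x} denote X_1,…,X_n rearranged in ascending order of distance to x (ties broken by index). Then for any γ > 0 there exists a constant c_1 > 0, depending only on γ and d, such that for all n and all 1 ≤ k ≤ n, (1/k) · E[ Σ_{i=1}^k ‖X_{i,X} − X‖^{2γ} ] ≤ c_1 · (k/n)^{2γ/d}. -/
/-!
Split the `n` sample points into `k` disjoint blocks of `m = ⌊n/k⌋` points. The nearest points of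
the blocks are `k` distinct sample points, so the `2γ`-th powers of the `k` nearest-neighbour
distances sum to at most the sum over the blocks of the `2γ`-th power of the distance from `x`
to the block. Since `[0,1]^d ∩ B(x, t)` contains a cube of side `t/√d`, that distance `D` has tail
`P(D > t) ≤ (1 - (t/√d)^d)^m ≤ exp(-m (t/√d)^d)`, and the layer-cake formula turns this into
`E[D^p] ≤ d^(p/2) Γ(p/d + 1) m^(-p/d)`. Finally `m ≥ n/(2k)`.
-/

open MeasureTheory Finset

/-- The unit cube `[0,1]^d` in `ℝ^d`. -/
def unitCube (d : ℕ) : Set (EuclideanSpace ℝ (Fin d)) :=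
  WithLp.ofLp ⁻¹' (Set.univ.pi fun _ => Set.Icc (0 : ℝ) 1)

/-- The permutation rearranging `X 0, …, X (n-1)` in ascending order of distance to `x`,
with ties broken by index: `X (nnPerm x X 0)` is the nearest neighbor of `x`, etc. -/
noncomputable def nnPerm {d n : ℕ} (x : EuclideanSpace ℝ (Fin d))
    (X : Fin n → EuclideanSpace ℝ (Fin d)) : Equiv.Perm (Fin n) :=
  Tuple.sort (fun i => toLex (‖X i - x‖, i))

/-- The indices `{0, …, k-1}` as a finset of `Fin n`. -/
def firstK (n k : ℕ) : Finset (Fin n) := Finset.univ.filter fun i => (i : ℕ) < k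

open Function Real

theorem integrable_rpow_and_integral_rpow_le_of_meas_lt_le_exp {Ω : Type*} [MeasurableSpace Ω]
    {μ : Measure Ω} {Z : Ω → ℝ} (hZ0 : 0 ≤ᵐ[μ] Z) (hZ : AEMeasurable Z μ) {p q b : ℝ}
    (hp : 0 < p) (hq : 0 < q) (hb : 0 < b)
    (htail : ∀ t > 0, μ {ω | t < Z ω} ≤ ENNReal.ofReal (exp (-b * t ^ q))) :
    Integrable (fun ω => Z ω ^ p) μ ∧ ∫ ω, Z ω ^ p ∂μ ≤ b ^ (-p / q) * Gamma (p / q + 1) := by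
  have hZp0 : 0 ≤ᵐ[μ] fun ω => Z ω ^ p := hZ0.mono fun ω h => rpow_nonneg h p
  have hint := integrableOn_rpow_mul_exp_neg_mul_rpow (s := p - 1) (by linarith) hq hb
  have hlint :
      ∫⁻ ω, ENNReal.ofReal (Z ω ^ p) ∂μ ≤ ENNReal.ofReal (b ^ (-p / q) * Gamma (p / q + 1)) :=
    calc ∫⁻ ω, ENNReal.ofReal (Z ω ^ p) ∂μ
        = ENNReal.ofReal p * ∫⁻ t in Set.Ioi 0, μ {ω | t < Z ω} * ENNReal.ofReal (t ^ (p - 1)) :=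
          lintegral_rpow_eq_lintegral_meas_lt_mul μ hZ0 hZ hp
      _ ≤ ENNReal.ofReal p *
            ∫⁻ t in Set.Ioi 0, ENNReal.ofReal (t ^ (p - 1) * exp (-b * t ^ q)) := by
          refine mul_le_mul_right (setLIntegral_mono' measurableSet_Ioi fun t ht => ?_) _
          rw [mul_comm, ENNReal.ofReal_mul (rpow_nonneg (le_of_lt ht) _)]
          gcongr
          exact htail t ht
      _ = ENNReal.ofReal (p * (b ^ (-(p - 1 + 1) / q) * (1 / q) * Gamma ((p - 1 + 1) / q))) := by
          rw [← ofReal_integral_eq_lintegral_ofReal hint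
            (ae_restrict_of_forall_mem measurableSet_Ioi fun t (ht : 0 < t) => by positivity),
            integral_rpow_mul_exp_neg_mul_rpow hq (by linarith) hb, ENNReal.ofReal_mul hp.le]
      _ = ENNReal.ofReal (b ^ (-p / q) * Gamma (p / q + 1)) := by
          rw [sub_add_cancel, Gamma_add_one (by positivity)]
          ring_nf
  refine ⟨⟨(hZ.pow_const p).aestronglyMeasurable, ?_⟩, ?_⟩
  · exact (hasFiniteIntegral_iff_ofReal hZp0).2 (hlint.trans_lt ENNReal.ofReal_lt_top)
  · rw [integral_eq_lintegral_of_nonneg_ae hZp0 (hZ.pow_const p).aestronglyMeasurable]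
    exact ENNReal.toReal_le_of_le_ofReal (by positivity) hlint

theorem MeasureTheory.Measure.pi_forall_mem_eq_pow {ι Ω : Type*} [Fintype ι] [MeasurableSpace Ω]
    (μ : Measure Ω) [IsProbabilityMeasure μ] (S : Finset ι) (A : Set Ω) :
    Measure.pi (fun _ : ι => μ) {X | ∀ i ∈ S, X i ∈ A} = μ A ^ #S := by
  classical
  have : {X : ι → Ω | ∀ i ∈ S, X i ∈ A} = Set.univ.pi fun i => if i ∈ S then A else Set.univ := by
    ext X
    simp only [Set.mem_ofPred_eq, Set.mem_pi, Set.mem_univ, true_imp_iff]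
    exact forall_congr' fun i => by split_ifs <;> simp [*]
  rw [this, Measure.pi_pi]
  simp [apply_ite μ, prod_ite_mem]

section Sorting

variable {α : Type*} [LinearOrder α] {n : ℕ} {f : Fin n → α} {σ : Equiv.Perm (Fin n)}

theorem le_of_lt_card_filter_le (hσ : Monotone (f ∘ σ)) {c : α} {i : Fin n}
    (hi : (i : ℕ) < #{t | f t ≤ c}) : f (σ i) ≤ c := by
  by_contra! hc
  have hmaps : Set.MapsTo σ.symm ({t | f t ≤ c} : Finset (Fin n)) (Iio i) := fun t ht => by
    rw [coe_filter] at ht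
    rw [coe_Iio, Set.mem_Iio]
    by_contra! hit
    exact (hc.trans_le (by simpa using hσ hit)).not_ge ht.2
  have := card_le_card_of_injOn σ.symm hmaps σ.symm.injective.injOn
  rw [Fin.card_Iio] at this
  omega

theorem sum_comp_castLE_le_sum_comp_of_injective {β : Type*} [AddCommMonoid β] [PartialOrder β]
    [IsOrderedAddMonoid β] (hσ : Monotone (f ∘ σ)) {k : ℕ} (hkn : k ≤ n) {w : Fin k → Fin n}
    (hw : Injective w) {g : α → β} (hg : MonotoneOn g (Set.range f)) :
    ∑ i : Fin k, g (f (σ (Fin.castLE hkn i))) ≤ ∑ j, g (f (w j)) := by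
  set τ := Tuple.sort (f ∘ w)
  have hτ : Monotone (f ∘ w ∘ τ) := Tuple.monotone_sort (f ∘ w)
  refine le_of_le_of_eq (sum_le_sum fun i _ => ?_) (Equiv.sum_comp τ fun j => g (f (w j)))
  refine hg ⟨_, rfl⟩ ⟨_, rfl⟩ (le_of_lt_card_filter_le hσ ?_)
  have hmaps : Set.MapsTo (w ∘ τ) (Iic i) ({t | f t ≤ f (w (τ i))} : Finset (Fin n)) :=
    fun j hj => by simpa using hτ (Finset.mem_Iic.1 hj)
  have := card_le_card_of_injOn _ hmaps (hw.comp τ.injective).injOn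
  rw [Fin.card_Iic] at this
  simpa using this

end Sorting

theorem sum_firstK_eq_sum_castLE {M : Type*} [AddCommMonoid M] {n k : ℕ} (hkn : k ≤ n)
    (h : Fin n → M) : ∑ i ∈ firstK n k, h i = ∑ i : Fin k, h (Fin.castLE hkn i) := by
  have : firstK n k = univ.map (Fin.castLEEmb hkn) := by
    ext i
    simp only [firstK, mem_filter, mem_univ, true_and, mem_map, Fin.castLEEmb_apply]
    exact ⟨fun h => ⟨⟨i, h⟩, rfl⟩, by rintro ⟨j, rfl⟩; exact j.2⟩
  rw [this, sum_map]
  rfl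

theorem exists_pairwise_disjoint_card_eq {n k m : ℕ} (h : k * m ≤ n) :
    ∃ S : Fin k → Finset (Fin n), Pairwise (Disjoint on S) ∧ ∀ j, #(S j) = m := by
  let e : Fin k × Fin m ↪ Fin n := finProdFinEquiv.toEmbedding.trans (Fin.castLEEmb h)
  refine ⟨fun j => univ.map ((Embedding.sectR j (Fin m)).trans e), ?_, fun j => by simp⟩
  intro j j' hjj'
  simp only [onFun, disjoint_left, mem_map, mem_univ, true_and]
  rintro _ ⟨i, rfl⟩ ⟨i', hi'⟩
  exact hjj' (congrArg Prod.fst (e.injective hi')).symm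

theorem EuclideanSpace.norm_le_sqrt_card_mul {ι : Type*} [Fintype ι] {v : EuclideanSpace ℝ ι}
    {r : ℝ} (hr : 0 ≤ r) (hv : ∀ j, |v j| ≤ r) : ‖v‖ ≤ √(Fintype.card ι) * r := by
  rw [EuclideanSpace.norm_eq, ← sqrt_sq hr, ← sqrt_mul (Nat.cast_nonneg _)]
  refine sqrt_le_sqrt ?_
  calc ∑ j, ‖v j‖ ^ 2 ≤ ∑ _j : ι, r ^ 2 :=
        sum_le_sum fun j _ => pow_le_pow_left₀ (norm_nonneg _) (hv j) 2
    _ = Fintype.card ι * r ^ 2 := by simp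

theorem EuclideanSpace.volume_preimage_ofLp_pi_Icc {ι : Type*} [Fintype ι] (a b : ι → ℝ) :
    volume (WithLp.ofLp ⁻¹' Set.univ.pi fun j => Set.Icc (a j) (b j) : Set (EuclideanSpace ℝ ι))
      = ∏ j, ENNReal.ofReal (b j - a j) := by
  rw [(PiLp.volume_preserving_ofLp ι).measure_preimage
    (MeasurableSet.univ_pi fun _ => measurableSet_Icc).nullMeasurableSet, volume_pi_pi]
  simp only [Real.volume_Icc]

section UnitCube

variable {d : ℕ}

theorem measurableSet_unitCube : MeasurableSet (unitCube d) :=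
  (MeasurableSet.univ_pi fun _ => measurableSet_Icc).preimage (WithLp.measurable_ofLp _ _)

theorem volume_unitCube : volume (unitCube d) = 1 := by
  rw [unitCube, EuclideanSpace.volume_preimage_ofLp_pi_Icc]
  simp

instance : IsProbabilityMeasure (volume.restrict (unitCube d)) :=
  ⟨by rw [Measure.restrict_apply_univ, volume_unitCube]⟩

theorem norm_sub_le_sqrt_of_mem_unitCube {x y : EuclideanSpace ℝ (Fin d)} (hx : x ∈ unitCube d)
    (hy : y ∈ unitCube d) : ‖y - x‖ ≤ √d := by
  simpa using EuclideanSpace.norm_le_sqrt_card_mul (v := y - x) zero_le_one fun j => by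
    obtain ⟨hx0, hx1⟩ := hx j trivial
    obtain ⟨hy0, hy1⟩ := hy j trivial
    rw [PiLp.sub_apply, abs_sub_le_iff]
    constructor <;> linarith

/-- A cube of side `r` containing `x` fits in `[0,1]^d` and has diameter `√d r`. -/
theorem ofReal_pow_le_volume_unitCube_inter_closedBall {x : EuclideanSpace ℝ (Fin d)}
    (hx : x ∈ unitCube d) {r : ℝ} (hr0 : 0 ≤ r) (hr1 : r ≤ 1) :
    ENNReal.ofReal r ^ d ≤ volume (unitCube d ∩ Metric.closedBall x (√d * r)) := by
  set a : Fin d → ℝ := fun j => min (x j) (1 - r)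
  have ha : ∀ j, 0 ≤ a j ∧ a j + r ≤ 1 ∧ a j ≤ x j ∧ x j ≤ a j + r := fun j => by
    have := hx j trivial
    simp only [a, Set.mem_Icc] at this ⊢
    grind
  have hbox : WithLp.ofLp ⁻¹' Set.univ.pi (fun j => Set.Icc (a j) (a j + r))
      ⊆ unitCube d ∩ Metric.closedBall x (√d * r) := fun y hy => by
    have hyj : ∀ j, a j ≤ y j ∧ y j ≤ a j + r := fun j => hy j trivial
    refine ⟨fun j _ => ⟨by linarith [ha j, hyj j], by linarith [ha j, hyj j]⟩, ?_⟩
    rw [Metric.mem_closedBall, dist_eq_norm]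
    simpa using EuclideanSpace.norm_le_sqrt_card_mul (v := y - x) hr0 fun j => by
      rw [PiLp.sub_apply, abs_sub_le_iff]
      constructor <;> linarith [ha j, hyj j]
  calc ENNReal.ofReal r ^ d = volume (WithLp.ofLp ⁻¹' Set.univ.pi fun j => Set.Icc (a j) (a j + r)
        : Set (EuclideanSpace ℝ (Fin d))) := by
        rw [EuclideanSpace.volume_preimage_ofLp_pi_Icc]
        simp
    _ ≤ _ := measure_mono hbox

theorem volume_restrict_unitCube_lt_norm_sub_le {x : EuclideanSpace ℝ (Fin d)}
    (hx : x ∈ unitCube d) {t : ℝ} (ht : 0 ≤ t) :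
    volume.restrict (unitCube d) {y | t < ‖y - x‖} ≤ ENNReal.ofReal (exp (-(t / √d) ^ d)) := by
  rcases le_or_gt √d t with htd | htd
  · refine le_of_eq_of_le ?_ bot_le
    rw [Measure.restrict_apply' measurableSet_unitCube]
    refine measure_mono_null (fun y ⟨hy, hyC⟩ => ?_) measure_empty
    exact (htd.trans_lt hy).not_ge (norm_sub_le_sqrt_of_mem_unitCube hx hyC)
  set r := t / √d
  have hsd : 0 < √d := ht.trans_lt htd
  have hr0 : 0 ≤ r := by positivity
  have hr1 : r ≤ 1 := (div_le_one hsd).2 htd.le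
  have hball : {y | t < ‖y - x‖} = (Metric.closedBall x (√d * r))ᶜ := by
    ext y
    simp [r, mul_div_cancel₀ _ hsd.ne', dist_eq_norm]
  calc volume.restrict (unitCube d) {y | t < ‖y - x‖}
      = 1 - volume.restrict (unitCube d) (Metric.closedBall x (√d * r)) := by
        rw [hball, prob_compl_eq_one_sub measurableSet_closedBall]
    _ ≤ 1 - ENNReal.ofReal r ^ d := by
        rw [Measure.restrict_apply measurableSet_closedBall, Set.inter_comm]
        gcongr
        exact ofReal_pow_le_volume_unitCube_inter_closedBall hx hr0 hr1
    _ = ENNReal.ofReal (1 - r ^ d) := by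
        rw [ENNReal.ofReal_sub _ (by positivity), ENNReal.ofReal_one, ENNReal.ofReal_pow hr0]
    _ ≤ ENNReal.ofReal (exp (-r ^ d)) := by
        gcongr
        linarith [add_one_le_exp (-r ^ d)]

theorem pi_lt_inf'_norm_sub_le {n : ℕ} {x : EuclideanSpace ℝ (Fin d)} (hx : x ∈ unitCube d)
    (S : Finset (Fin n)) (hS : S.Nonempty) {t : ℝ} (ht : 0 ≤ t) :
    Measure.pi (fun _ => volume.restrict (unitCube d)) {X | t < S.inf' hS fun i => ‖X i - x‖}
      ≤ ENNReal.ofReal (exp (-(#S / √d ^ d) * t ^ d)) := by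
  have hevent : {X : Fin n → EuclideanSpace ℝ (Fin d) | t < S.inf' hS fun i => ‖X i - x‖}
      = {X | ∀ i ∈ S, X i ∈ {y | t < ‖y - x‖}} := by
    ext X
    exact lt_inf'_iff (f := fun i => ‖X i - x‖) hS
  rw [hevent, Measure.pi_forall_mem_eq_pow]
  calc volume.restrict (unitCube d) {y | t < ‖y - x‖} ^ #S
      ≤ ENNReal.ofReal (exp (-(t / √d) ^ d)) ^ #S := by
        gcongr
        exact volume_restrict_unitCube_lt_norm_sub_le hx ht
    _ = ENNReal.ofReal (exp (-(#S / √d ^ d) * t ^ d)) := by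
        rw [← ENNReal.ofReal_pow (exp_nonneg _), ← exp_nat_mul, div_pow]
        ring_nf

theorem integrable_and_integral_inf'_norm_sub_rpow_le (hd : 0 < d) {n : ℕ}
    {x : EuclideanSpace ℝ (Fin d)} (hx : x ∈ unitCube d) (S : Finset (Fin n)) (hS : S.Nonempty)
    {p : ℝ} (hp : 0 < p) :
    Integrable (fun X => (S.inf' hS fun i => ‖X i - x‖) ^ p)
        (Measure.pi fun _ => volume.restrict (unitCube d)) ∧
      ∫ X, (S.inf' hS fun i => ‖X i - x‖) ^ p ∂(Measure.pi fun _ => volume.restrict (unitCube d))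
        ≤ √d ^ p * Gamma (p / d + 1) * (#S : ℝ) ^ (-p / d) := by
  have hsd : 0 < √d := sqrt_pos.2 (by exact_mod_cast hd)
  have hcont : Continuous fun X : Fin n → EuclideanSpace ℝ (Fin d) =>
      S.inf' hS fun i => ‖X i - x‖ :=
    Continuous.finset_inf'_apply hS fun i _ => by fun_prop
  have hb : (#S / √d ^ d : ℝ) ^ (-p / d) = √d ^ p * (#S : ℝ) ^ (-p / d) := by
    have hexp : (d : ℝ) * (-p / d) = -p := by field_simp
    rw [div_rpow (by positivity) (by positivity), ← rpow_natCast, ← rpow_mul hsd.le, hexp,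
      rpow_neg hsd.le, div_inv_eq_mul, mul_comm]
  rw [mul_right_comm, ← hb]
  exact integrable_rpow_and_integral_rpow_le_of_meas_lt_le_exp
    (Filter.Eventually.of_forall fun X => le_inf' hS _ fun i _ => norm_nonneg _)
    hcont.aemeasurable hp (by exact_mod_cast hd) (by positivity)
    fun t ht => by simpa only [rpow_natCast] using pi_lt_inf'_norm_sub_le hx S hS ht.le

end UnitCube

theorem monotone_norm_sub_nnPerm {d n : ℕ} (x : EuclideanSpace ℝ (Fin d))
    (X : Fin n → EuclideanSpace ℝ (Fin d)) : Monotone ((fun i => ‖X i - x‖) ∘ nnPerm x X) :=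
  fun _ _ hij =>
    Prod.Lex.monotone_fst_ofLex (Tuple.monotone_sort (fun i => toLex (‖X i - x‖, i)) hij)

/-- Each block contributes its nearest point, and these `k` distinct points are at least as far
as the `k` nearest neighbours. -/
theorem sum_firstK_nnPerm_rpow_le_sum_inf' {d n k : ℕ} (hkn : k ≤ n)
    (x : EuclideanSpace ℝ (Fin d)) (X : Fin n → EuclideanSpace ℝ (Fin d))
    {S : Fin k → Finset (Fin n)} (hS : ∀ j, (S j).Nonempty) (hdisj : Pairwise (Disjoint on S))
    {p : ℝ} (hp : 0 ≤ p) :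
    ∑ i ∈ firstK n k, ‖X (nnPerm x X i) - x‖ ^ p
      ≤ ∑ j, ((S j).inf' (hS j) fun i => ‖X i - x‖) ^ p := by
  choose w hwS hwf using fun j => exists_mem_eq_inf' (hS j) fun i => ‖X i - x‖
  have hw : Injective w := fun j j' h => by
    by_contra hjj'
    exact disjoint_left.1 (hdisj hjj') (hwS j) (h ▸ hwS j')
  simp only [hwf, sum_firstK_eq_sum_castLE hkn]
  refine sum_comp_castLE_le_sum_comp_of_injective (monotone_norm_sub_nnPerm x X) hkn hw
    ((monotoneOn_rpow_Ici_of_exponent_nonneg hp).mono ?_)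
  rintro _ ⟨i, rfl⟩
  exact norm_nonneg _

theorem integral_sum_firstK_nnPerm_rpow_le {d : ℕ} (hd : 0 < d) {x : EuclideanSpace ℝ (Fin d)}
    (hx : x ∈ unitCube d) {n k : ℕ} (hk : 0 < k) (hkn : k ≤ n) {p : ℝ} (hp : 0 < p) :
    ∫ X, (∑ i ∈ firstK n k, ‖X (nnPerm x X i) - x‖ ^ p)
        ∂(Measure.pi fun _ => volume.restrict (unitCube d))
      ≤ k * (√d ^ p * Gamma (p / d + 1) * ((n / k : ℕ) : ℝ) ^ (-p / d)) := by
  obtain ⟨S, hdisj, hcard⟩ := exists_pairwise_disjoint_card_eq (Nat.mul_div_le n k)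
  have hS : ∀ j, (S j).Nonempty := fun j => card_pos.1 (hcard j ▸ Nat.div_pos hkn hk)
  have hblock := fun j => integrable_and_integral_inf'_norm_sub_rpow_le hd hx (S j) (hS j) hp
  calc ∫ X, (∑ i ∈ firstK n k, ‖X (nnPerm x X i) - x‖ ^ p)
        ∂(Measure.pi fun _ => volume.restrict (unitCube d))
      ≤ ∫ X, (∑ j, ((S j).inf' (hS j) fun i => ‖X i - x‖) ^ p)
        ∂(Measure.pi fun _ => volume.restrict (unitCube d)) :=
        integral_mono_of_nonneg (.of_forall fun X => by positivity)
          (integrable_finsetSum _ fun j _ => (hblock j).1)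
          (.of_forall fun X => sum_firstK_nnPerm_rpow_le_sum_inf' hkn x X hS hdisj hp.le)
    _ = ∑ j, ∫ X, ((S j).inf' (hS j) fun i => ‖X i - x‖) ^ p
        ∂(Measure.pi fun _ => volume.restrict (unitCube d)) :=
        integral_finsetSum _ fun j _ => (hblock j).1
    _ ≤ ∑ _j : Fin k, √d ^ p * Gamma (p / d + 1) * ((n / k : ℕ) : ℝ) ^ (-p / d) :=
        sum_le_sum fun j _ => hcard j ▸ (hblock j).2
    _ = k * (√d ^ p * Gamma (p / d + 1) * ((n / k : ℕ) : ℝ) ^ (-p / d)) := by simp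

theorem natCast_div_rpow_neg_le {n k : ℕ} (hk : 0 < k) (hkn : k ≤ n) {s : ℝ} (hs : 0 ≤ s) :
    ((n / k : ℕ) : ℝ) ^ (-s) ≤ 2 ^ s * ((k : ℝ) / n) ^ s := by
  have hm : 0 < n / k := Nat.div_pos hkn hk
  have hn : n ≤ 2 * k * (n / k) := by
    have := Nat.lt_mul_div_succ n hk
    nlinarith
  have hinv : ((n / k : ℕ) : ℝ)⁻¹ ≤ 2 * k / n := by
    have : (n : ℝ) ≤ 2 * k * (n / k : ℕ) := by exact_mod_cast hn
    rw [inv_le_iff_one_le_mul₀ (by positivity), div_mul_eq_mul_div,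
      le_div_iff₀ (by exact_mod_cast hk.trans_le hkn)]
    linarith
  rw [rpow_neg (Nat.cast_nonneg _), ← inv_rpow (Nat.cast_nonneg _), ← mul_rpow (by norm_num)
    (by positivity), ← mul_div_assoc]
  exact rpow_le_rpow (by positivity) hinv hs

/-- Proposition: if `X, X₁, …, Xₙ` are i.i.d. uniform on `[0,1]^d`, then for
any `γ > 0` there is `c₁ > 0` depending only on `γ` and `d` with
`(1/k) E[∑_{i=1}^k ‖X_{i,X} - X‖^{2γ}] ≤ c₁ (k/n)^{2γ/d}` for all `1 ≤ k ≤ n`. -/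
theorem rate_knn_distance_moment (d : ℕ) (hd : 0 < d) (γ : ℝ) (hγ : 0 < γ) :
    ∃ c₁ : ℝ, 0 < c₁ ∧ ∀ n k : ℕ, 1 ≤ k → k ≤ n →
      (1 / (k : ℝ)) *
          ∫ x in unitCube d,
            (∫ X : Fin n → EuclideanSpace ℝ (Fin d),
                (∑ i ∈ firstK n k, ‖X (nnPerm x X i) - x‖ ^ (2 * γ))
              ∂(Measure.pi fun _ => volume.restrict (unitCube d)))
        ≤ c₁ * ((k : ℝ) / (n : ℝ)) ^ (2 * γ / (d : ℝ)) := by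
  set C := √d ^ (2 * γ) * Gamma (2 * γ / d + 1)
  have hC : 0 < C := by
    have := Gamma_pos_of_pos (by positivity : 0 < 2 * γ / d + 1)
    positivity
  refine ⟨C * 2 ^ (2 * γ / d), by positivity, fun n k hk hkn => ?_⟩
  have hinner := fun x (hx : x ∈ unitCube d) =>
    integral_sum_firstK_nnPerm_rpow_le hd hx hk hkn (by positivity : 0 < 2 * γ)
  have houter : ∫ x in unitCube d, (∫ X : Fin n → EuclideanSpace ℝ (Fin d),
        (∑ i ∈ firstK n k, ‖X (nnPerm x X i) - x‖ ^ (2 * γ))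
        ∂(Measure.pi fun _ => volume.restrict (unitCube d)))
      ≤ k * (C * ((n / k : ℕ) : ℝ) ^ (-(2 * γ) / d)) := by
    refine (integral_mono_of_nonneg (.of_forall fun x => integral_nonneg fun X => by positivity)
      (integrable_const _) ((ae_restrict_iff' measurableSet_unitCube).2 (.of_forall hinner))).trans
      (by simp [C])
  calc (1 / (k : ℝ)) * _ ≤ (1 / k) * (k * (C * ((n / k : ℕ) : ℝ) ^ (-(2 * γ) / d))) := by gcongr
    _ = C * ((n / k : ℕ) : ℝ) ^ (-(2 * γ / d)) := by field_simp
    _ ≤ C * (2 ^ (2 * γ / d) * ((k : ℝ) / n) ^ (2 * γ / d)) := by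
        gcongr
        exact natCast_div_rpow_neg_le hk hkn (by positivity)
    _ = C * 2 ^ (2 * γ / d) * ((k : ℝ) / n) ^ (2 * γ / d) := by ring
end

section
/- For all u, v ∈ [0,1]^d with ‖u − v‖ ≤ 1/2, one has vol[G(u,v)] ≥ 2^{−d} · vol[H(u,v)]. More precisely, letting I := {i : 0 ≤ u^{(i)} ≤ 1/2} and M := {w ∈ ℝ^d : ‖w − u‖ ≤ ‖u − v‖, w^{(i)} ≥ u^{(i)} for i ∈ I, w^{(j)} ≤ u^{(j)} for j ∉ I}, one has M ⊂ G(u,v) and vol[M] = 2^{−d} vol[H(u,v)]. -/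
open MeasureTheory Finset

/-- `H(u,v)`: the closed Euclidean ball centered at `u` of radius `‖v - u‖`. -/
def Hset {d : ℕ} (u v : EuclideanSpace ℝ (Fin d)) : Set (EuclideanSpace ℝ (Fin d)) :=
  Metric.closedBall u ‖v - u‖

/-- `G(u,v) = H(u,v) ∩ [0,1]^d`. -/
def Gset {d : ℕ} (u v : EuclideanSpace ℝ (Fin d)) : Set (EuclideanSpace ℝ (Fin d)) :=
  Hset u v ∩ unitCube d

/-!
Along each coordinate a point of `M` moves away from `u⁽ⁱ⁾` upwards when `u⁽ⁱ⁾ ≤ 1/2` and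
downwards otherwise, by at most `‖u - v‖ ≤ 1/2`, so it stays in `[0,1]`. `M` is the translate by
`u` of one closed orthant of the ball of radius `‖u - v‖`. The `2^d` closed orthants cover the
ball, are exchanged by coordinate sign flips (linear isometries, hence volume and ball preserving)
and overlap only in coordinate hyperplanes, which are null; so each one carries `2^{-d}` of the
volume of the ball.
-/

open Metric

section Orthant

variable {ι : Type*}

def orthant (s : Set ι) : Set (EuclideanSpace ℝ ι) :=
  {x | ∀ i, (i ∈ s → 0 ≤ x i) ∧ (i ∉ s → x i ≤ 0)}

lemma isClosed_orthant (s : Set ι) : IsClosed (orthant s) := by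
  have hcoord (i : ι) : Continuous fun x : EuclideanSpace ℝ ι => x i := by fun_prop
  simp only [orthant, Set.ofPred_forall, Set.ofPred_and]
  refine isClosed_iInter fun i => ?_
  by_cases h : i ∈ s
  · simpa [h] using isClosed_le continuous_const (hcoord i)
  · simpa [h] using isClosed_le (hcoord i) continuous_const

lemma iUnion_orthant : ⋃ s : Set ι, orthant s = Set.univ :=
  Set.eq_univ_of_forall fun x =>
    Set.mem_iUnion.2 ⟨{i | 0 ≤ x i}, fun _ => ⟨id, fun h => (not_le.1 h).le⟩⟩

variable [Fintype ι]

lemma volume_coord_eq_zero (i : ι) : volume {x : EuclideanSpace ℝ ι | x i = 0} = 0 := by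
  classical
  refine Measure.addHaar_submodule _ (LinearMap.ker (EuclideanSpace.proj (𝕜 := ℝ) i).toLinearMap)
    fun h => ?_
  have : EuclideanSpace.single i (1 : ℝ) ∈ LinearMap.ker (EuclideanSpace.proj i).toLinearMap :=
    h ▸ Submodule.mem_top
  simp at this

lemma aedisjoint_orthant {s t : Set ι} (hst : s ≠ t) :
    AEDisjoint volume (orthant s) (orthant t) := by
  obtain ⟨i, hi⟩ : ∃ i, ¬(i ∈ s ↔ i ∈ t) := by
    by_contra! h
    exact hst (Set.ext h)
  refine measure_mono_null (fun x ⟨hs, ht⟩ => ?_) (volume_coord_eq_zero i)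
  by_cases his : i ∈ s
  · exact le_antisymm ((ht i).2 (by tauto)) ((hs i).1 his)
  · exact le_antisymm ((hs i).2 his) ((ht i).1 (by tauto))

open Classical in
noncomputable def signFlip (s : Set ι) : EuclideanSpace ℝ ι ≃ₗᵢ[ℝ] EuclideanSpace ℝ ι :=
  .piLpCongrRight 2 fun i => if i ∈ s then .refl ℝ ℝ else .neg ℝ

lemma signFlip_apply (s : Set ι) (x : EuclideanSpace ℝ ι) (i : ι) [Decidable (i ∈ s)] :
    signFlip s x i = if i ∈ s then x i else -x i := by
  by_cases h : i ∈ s <;> simp [signFlip, h]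

lemma signFlip_preimage_orthant_univ (s : Set ι) :
    signFlip s ⁻¹' orthant Set.univ = orthant s := by
  classical
  ext x
  refine forall_congr' fun i => ?_
  by_cases h : i ∈ s <;> simp [signFlip_apply, h]

lemma volume_closedBall_inter_orthant (s : Set ι) (r : ℝ) :
    volume (closedBall (0 : EuclideanSpace ℝ ι) r ∩ orthant s) =
      volume (closedBall (0 : EuclideanSpace ℝ ι) r ∩ orthant Set.univ) := by
  have hpre : signFlip s ⁻¹' (closedBall 0 r ∩ orthant Set.univ) = closedBall 0 r ∩ orthant s := by
    rw [Set.preimage_inter, signFlip_preimage_orthant_univ, LinearIsometryEquiv.preimage_closedBall,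
      map_zero]
  rw [← hpre, (signFlip s).measurePreserving.measure_preimage
    (isClosed_closedBall.inter (isClosed_orthant _)).nullMeasurableSet]

theorem volume_closedBall_eq_two_pow_mul (r : ℝ) :
    volume (closedBall (0 : EuclideanSpace ℝ ι) r) =
      2 ^ Fintype.card ι * volume (closedBall (0 : EuclideanSpace ℝ ι) r ∩ orthant Set.univ) := by
  classical
  calc volume (closedBall (0 : EuclideanSpace ℝ ι) r)
      = volume (⋃ s : Set ι, closedBall 0 r ∩ orthant s) := by
        rw [← Set.inter_iUnion, iUnion_orthant, Set.inter_univ]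
    _ = ∑ s : Set ι, volume (closedBall (0 : EuclideanSpace ℝ ι) r ∩ orthant s) := by
        rw [measure_iUnion₀ (fun s t hst =>
            (aedisjoint_orthant hst).mono Set.inter_subset_right Set.inter_subset_right)
          fun s => (isClosed_closedBall.inter (isClosed_orthant s)).nullMeasurableSet, tsum_fintype]
    _ = 2 ^ Fintype.card ι * volume (closedBall (0 : EuclideanSpace ℝ ι) r ∩ orthant Set.univ) := by
        simp [volume_closedBall_inter_orthant, Fintype.card_set]

theorem volume_closedBall_eq_two_pow_mul_preimage_sub (u : EuclideanSpace ℝ ι) (r : ℝ)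
    (s : Set ι) :
    volume (closedBall u r) =
      2 ^ Fintype.card ι * volume ((· - u) ⁻¹' (closedBall 0 r ∩ orthant s)) := by
  simp_rw [sub_eq_add_neg]
  rw [measure_preimage_add_right, volume_closedBall_inter_orthant,
    ← volume_closedBall_eq_two_pow_mul, Measure.addHaar_closedBall_center]

end Orthant

lemma mem_Icc_of_abs_sub_le_half {a b : ℝ} (ha : a ∈ Set.Icc (0 : ℝ) 1) (hab : |b - a| ≤ 1 / 2)
    (hlow : (0 ≤ a ∧ a ≤ 1 / 2) → a ≤ b) (hhigh : ¬(0 ≤ a ∧ a ≤ 1 / 2) → b ≤ a) :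
    b ∈ Set.Icc (0 : ℝ) 1 := by
  rw [abs_le] at hab
  obtain ⟨ha0, ha1⟩ := ha
  by_cases h : a ≤ 1 / 2
  · have := hlow ⟨ha0, h⟩
    constructor <;> linarith
  · have := hhigh fun h' => h h'.2
    constructor <;> linarith

theorem Gset_volume_lower_bound_small_radius_general (d : ℕ)
    (u v : EuclideanSpace ℝ (Fin d)) (hu : u ∈ unitCube d)
    (huv : ‖u - v‖ ≤ 1 / 2) :
    {w : EuclideanSpace ℝ (Fin d) | ‖w - u‖ ≤ ‖u - v‖ ∧
          ∀ i : Fin d, ((0 ≤ u i ∧ u i ≤ 1 / 2) → u i ≤ w i) ∧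
            (¬(0 ≤ u i ∧ u i ≤ 1 / 2) → w i ≤ u i)} ⊆ Gset u v ∧
      (volume {w : EuclideanSpace ℝ (Fin d) | ‖w - u‖ ≤ ‖u - v‖ ∧
          ∀ i : Fin d, ((0 ≤ u i ∧ u i ≤ 1 / 2) → u i ≤ w i) ∧
            (¬(0 ≤ u i ∧ u i ≤ 1 / 2) → w i ≤ u i)}).toReal =
        ((2 : ℝ) ^ d)⁻¹ * (volume (Hset u v)).toReal ∧
      ((2 : ℝ) ^ d)⁻¹ * (volume (Hset u v)).toReal ≤ (volume (Gset u v)).toReal := by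
  set M := {w : EuclideanSpace ℝ (Fin d) | ‖w - u‖ ≤ ‖u - v‖ ∧
          ∀ i : Fin d, ((0 ≤ u i ∧ u i ≤ 1 / 2) → u i ≤ w i) ∧
            (¬(0 ≤ u i ∧ u i ≤ 1 / 2) → w i ≤ u i)}
  have hM : M = (· - u) ⁻¹' (closedBall 0 ‖u - v‖ ∩ orthant {i | 0 ≤ u i ∧ u i ≤ 1 / 2}) := by
    ext w
    simp [M, orthant, sub_nonneg]
  have hMG : M ⊆ Gset u v := by
    rintro w ⟨hwu, hw⟩
    refine ⟨by rwa [Hset, mem_closedBall, dist_eq_norm, norm_sub_rev v], fun i _ => ?_⟩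
    exact mem_Icc_of_abs_sub_le_half (hu i trivial)
      (((PiLp.norm_apply_le (w - u) i).trans hwu).trans huv) (hw i).1 (hw i).2
  have hH : volume (Hset u v) = 2 ^ d * volume M := by
    rw [hM, Hset, norm_sub_rev, volume_closedBall_eq_two_pow_mul_preimage_sub, Fintype.card_fin]
  have hG : volume (Gset u v) ≠ ⊤ :=
    ((measure_mono Set.inter_subset_left).trans_lt measure_closedBall_lt_top).ne
  have hMH : (volume M).toReal = ((2 : ℝ) ^ d)⁻¹ * (volume (Hset u v)).toReal := by
    rw [hH, ENNReal.toReal_mul, ENNReal.toReal_pow, ENNReal.toReal_ofNat,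
      inv_mul_cancel_left₀ (by positivity)]
  exact ⟨hMG, hMH, hMH ▸ ENNReal.toReal_mono hG (measure_mono hMG)⟩

/-- for `u, v ∈ [0,1]^d` with `‖u - v‖ ≤ 1/2`, letting
`I := {i : 0 ≤ u⁽ⁱ⁾ ≤ 1/2}` and
`M := {w : ‖w - u‖ ≤ ‖u - v‖, w⁽ⁱ⁾ ≥ u⁽ⁱ⁾ for i ∈ I, w⁽ʲ⁾ ≤ u⁽ʲ⁾ for j ∉ I}`,
one has `M ⊆ G(u,v)`, `vol[M] = 2^{-d} vol[H(u,v)]`, and hence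
`vol[G(u,v)] ≥ 2^{-d} vol[H(u,v)]`. -/
theorem Gset_volume_lower_bound_small_radius (d : ℕ) (hd : 0 < d)
    (u v : EuclideanSpace ℝ (Fin d)) (hu : u ∈ unitCube d) (hv : v ∈ unitCube d)
    (huv : ‖u - v‖ ≤ 1 / 2) :
    {w : EuclideanSpace ℝ (Fin d) | ‖w - u‖ ≤ ‖u - v‖ ∧
          ∀ i : Fin d, ((0 ≤ u i ∧ u i ≤ 1 / 2) → u i ≤ w i) ∧
            (¬(0 ≤ u i ∧ u i ≤ 1 / 2) → w i ≤ u i)} ⊆ Gset u v ∧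
      (volume {w : EuclideanSpace ℝ (Fin d) | ‖w - u‖ ≤ ‖u - v‖ ∧
          ∀ i : Fin d, ((0 ≤ u i ∧ u i ≤ 1 / 2) → u i ≤ w i) ∧
            (¬(0 ≤ u i ∧ u i ≤ 1 / 2) → w i ≤ u i)}).toReal =
        ((2 : ℝ) ^ d)⁻¹ * (volume (Hset u v)).toReal ∧
      ((2 : ℝ) ^ d)⁻¹ * (volume (Hset u v)).toReal ≤ (volume (Gset u v)).toReal :=
  Gset_volume_lower_bound_small_radius_general d u v hu huv
end

section
/- Define f : [0,1] → ℝ by f(u) := Σ_{i=0}^{d−1} (4d − 2i) [ C(d−1,i)(−2)^{d−1−i} / ((d−i) e_2^{(d−i)/d}) − C(d−1,i)(−2)^{d−1−i} / ((2d−i) e_2^{(d−i)/d}) ] · u^{(d−i)/d} for 0 < u < e_2/2^d, f(u) := 1 for e_2/2^d < u < 1, and f(0) = f(e_2/2^d) = f(1) := 0, where e_2 is the volume of the unit Euclidean ball in ℝ^d and C(d−1,i) denotes the binomial coefficient. Then f(u) ≥ 0 for all u ∈ [0,1], and there exists a constant c_3 > 0 depending only on d such that f(u) ≤ c_3 ·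 u^{1/d} for all u ∈ [0,1]; in particular, on (e_2/2^d, 1) one has f(u) = 1 ≤ (2/e_2^{1/d}) u^{1/d}. -/
open MeasureTheory Finset

/-!
With `x = (u / e₂)^{1/d}`, the identity `(d - i) C(d, i) = d C(d - 1, i)` turns the `i`-th
summand into `-C(d, i) (-2x)^{d-i}`, so on `(0, e₂/2^d)` the function is `1 - (1 - 2x)^d` with
`0 ≤ 2x ≤ 1`. It is therefore nonnegative there, and Bernoulli's inequality bounds it by `2dx`.
On `(e₂/2^d, 1)` it equals `1 ≤ 2x`. Hence `c₃ = 2d / e₂^{1/d}` works.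
-/

/-- The volume `e₂` of the unit Euclidean ball in `ℝ^d`. -/
noncomputable def ballVol (d : ℕ) : ℝ :=
  (volume (Metric.closedBall (0 : EuclideanSpace ℝ (Fin d)) 1)).toReal

lemma choose_mul_sub_eq (d i : ℕ) : d.choose i * (d - i) = (d - 1).choose i * d := by
  rcases d with _ | n
  · simp
  · simpa using (Nat.choose_mul_succ_eq n i).symm

lemma rpow_one_div_pow_sub {d i : ℕ} (hi : i ≤ d) {x : ℝ} (hx : 0 ≤ x) :
    (x ^ (1 / (d : ℝ))) ^ (d - i) = x ^ (((d : ℝ) - i) / d) := by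
  rw [← Real.rpow_natCast, ← Real.rpow_mul hx, Nat.cast_sub hi, one_div_mul_eq_div]

noncomputable def densityTerm (d : ℕ) (E u : ℝ) (i : ℕ) : ℝ :=
  (4 * (d : ℝ) - 2 * i) *
    (((d - 1).choose i : ℝ) * (-2 : ℝ) ^ (d - 1 - i) /
        (((d : ℝ) - i) * E ^ (((d : ℝ) - i) / d)) -
      ((d - 1).choose i : ℝ) * (-2 : ℝ) ^ (d - 1 - i) /
        ((2 * (d : ℝ) - i) * E ^ (((d : ℝ) - i) / d))) *
    u ^ (((d : ℝ) - i) / d)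

noncomputable def densitySum (d : ℕ) (E u : ℝ) : ℝ :=
  ∑ i ∈ range d, densityTerm d E u i

lemma densityTerm_eq {d i : ℕ} (hi : i < d) {E u : ℝ} (hE : 0 < E) (hu : 0 ≤ u) :
    densityTerm d E u i = -((-2 * (u / E) ^ (1 / (d : ℝ))) ^ (d - i) * d.choose i) := by
  have hid : (i : ℝ) < d := by exact_mod_cast hi
  have hsub : (0 : ℝ) < d - i := by linarith
  have htwo : (d * 2 - i : ℝ) ≠ 0 := by linarith
  have hchoose : (d.choose i : ℝ) * (d - i) = (d - 1).choose i * d := by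
    rw [← Nat.cast_sub hi.le]; exact_mod_cast choose_mul_sub_eq d i
  have hsign : (-2 : ℝ) ^ (d - i) = (-2) ^ (d - 1 - i) * -2 := by
    rw [← pow_succ]; congr 1; omega
  rw [densityTerm, mul_pow, rpow_one_div_pow_sub hi.le (div_nonneg hu hE.le),
    Real.div_rpow hu hE.le, hsign]
  field_simp
  linear_combination (-2 * (d * 2 - i) * u ^ (((d : ℝ) - i) / d)) * hchoose

lemma densitySum_eq (d : ℕ) {E u : ℝ} (hE : 0 < E) (hu : 0 ≤ u) :
    densitySum d E u = 1 - (1 - 2 * (u / E) ^ (1 / (d : ℝ))) ^ d := by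
  set y := -2 * (u / E) ^ (1 / (d : ℝ))
  have hbinom : (1 + y) ^ d = ∑ i ∈ range d, y ^ (d - i) * d.choose i + 1 := by
    simp [add_pow, sum_range_succ]
  rw [densitySum, sum_congr rfl fun i hi => densityTerm_eq (mem_range.1 hi) hE hu,
    sum_neg_distrib, show 1 - 2 * (u / E) ^ (1 / (d : ℝ)) = 1 + y by ring, hbinom]
  ring

lemma div_two_pow_rpow_one_div {d : ℕ} (hd : d ≠ 0) {E : ℝ} (hE : 0 ≤ E) :
    (E / 2 ^ d) ^ (1 / (d : ℝ)) = E ^ (1 / (d : ℝ)) / 2 := by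
  rw [Real.div_rpow hE (by positivity), one_div, Real.pow_rpow_inv_natCast zero_le_two hd]

lemma densitySum_mem_Icc {d : ℕ} (hd : d ≠ 0) {E u : ℝ} (hE : 0 < E) (hu₀ : 0 ≤ u)
    (hu : u ≤ E / 2 ^ d) :
    densitySum d E u ∈ Set.Icc 0 (2 * d / E ^ (1 / (d : ℝ)) * u ^ (1 / (d : ℝ))) := by
  have hEd : 0 < E ^ (1 / (d : ℝ)) := Real.rpow_pos_of_pos hE _
  set x := (u / E) ^ (1 / (d : ℝ)) with hx
  have hx₀ : 0 ≤ x := by positivity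
  have hx_le : 2 * x ≤ 1 := by
    have : u ^ (1 / (d : ℝ)) ≤ E ^ (1 / (d : ℝ)) / 2 := by
      rw [← div_two_pow_rpow_one_div hd hE.le]; gcongr
    rw [hx, Real.div_rpow hu₀ hE.le, mul_div_assoc', div_le_one hEd]
    linarith
  have hbound : 2 * d / E ^ (1 / (d : ℝ)) * u ^ (1 / (d : ℝ)) = d * (2 * x) := by
    rw [hx, Real.div_rpow hu₀ hE.le]; ring
  rw [densitySum_eq d hE hu₀, hbound, ← hx]
  constructor
  · have h : (1 - 2 * x) ^ d ≤ 1 := pow_le_one₀ (by linarith) (by linarith)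
    linarith
  · have h := one_add_mul_sub_le_pow (a := 1 - 2 * x) (by linarith) d
    linarith

lemma one_le_two_div_rpow_mul_rpow {d : ℕ} (hd : d ≠ 0) {E u : ℝ} (hE : 0 < E)
    (hu : E / 2 ^ d ≤ u) :
    1 ≤ 2 / E ^ (1 / (d : ℝ)) * u ^ (1 / (d : ℝ)) := by
  have hEd : 0 < E ^ (1 / (d : ℝ)) := Real.rpow_pos_of_pos hE _
  have : E ^ (1 / (d : ℝ)) / 2 ≤ u ^ (1 / (d : ℝ)) := by
    rw [← div_two_pow_rpow_one_div hd hE.le]; gcongr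
  rw [div_mul_eq_mul_div, le_div_iff₀ hEd]
  linarith

lemma ballVol_pos (d : ℕ) : 0 < ballVol d :=
  ENNReal.toReal_pos (Metric.measure_closedBall_pos volume _ one_pos).ne'
    measure_closedBall_lt_top.ne

/-- let `f : [0,1] → ℝ` be defined piecewise by the displayed sum on
`(0, e₂/2^d)`, by `1` on `(e₂/2^d, 1)`, and by `0` at `0`, `e₂/2^d`, `1`. Then `f ≥ 0` on
`[0,1]`, and there is `c₃ > 0` depending only on `d` with `f(u) ≤ c₃ u^{1/d}` on `[0,1]`;
in particular on `(e₂/2^d, 1)` one has `f(u) = 1 ≤ (2/e₂^{1/d}) u^{1/d}`. -/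
theorem density_bound (d : ℕ) (hd : 0 < d) (f : ℝ → ℝ)
    (hf₁ : ∀ u : ℝ, 0 < u → u < ballVol d / 2 ^ d →
      f u = ∑ i ∈ Finset.range d,
        (4 * (d : ℝ) - 2 * i) *
          (((d - 1).choose i : ℝ) * (-2 : ℝ) ^ (d - 1 - i) /
              (((d : ℝ) - i) * ballVol d ^ (((d : ℝ) - i) / d)) -
            ((d - 1).choose i : ℝ) * (-2 : ℝ) ^ (d - 1 - i) /
              ((2 * (d : ℝ) - i) * ballVol d ^ (((d : ℝ) - i) / d))) *
          u ^ (((d : ℝ) - i) / d))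
    (hf₂ : ∀ u : ℝ, ballVol d / 2 ^ d < u → u < 1 → f u = 1)
    (hf₃ : f 0 = 0) (hf₄ : f (ballVol d / 2 ^ d) = 0) (hf₅ : f 1 = 0) :
    (∀ u ∈ Set.Icc (0 : ℝ) 1, 0 ≤ f u) ∧
      (∃ c₃ : ℝ, 0 < c₃ ∧ ∀ u ∈ Set.Icc (0 : ℝ) 1, f u ≤ c₃ * u ^ (1 / (d : ℝ))) ∧
      (∀ u ∈ Set.Ioo (ballVol d / 2 ^ d) (1 : ℝ),
        f u = 1 ∧ f u ≤ 2 / ballVol d ^ (1 / (d : ℝ)) * u ^ (1 / (d : ℝ))) := by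
  have hE := ballVol_pos d
  set E := ballVol d
  set c₃ := 2 * d / E ^ (1 / (d : ℝ))
  have hupper : ∀ u ∈ Set.Ioo (E / 2 ^ d) 1,
      f u = 1 ∧ f u ≤ 2 / E ^ (1 / (d : ℝ)) * u ^ (1 / (d : ℝ)) :=
    fun u ⟨hgt, hlt⟩ => ⟨hf₂ u hgt hlt, (hf₂ u hgt hlt).trans_le
      (one_le_two_div_rpow_mul_rpow hd.ne' hE hgt.le)⟩
  have hbound : ∀ u ∈ Set.Icc (0 : ℝ) 1, f u ∈ Set.Icc 0 (c₃ * u ^ (1 / (d : ℝ))) := by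
    rintro u ⟨hu₀, hu₁⟩
    have hc : 0 ≤ c₃ * u ^ (1 / (d : ℝ)) := by positivity
    rcases hu₀.eq_or_lt with rfl | hu₀
    · simpa [hf₃] using hc
    rcases hu₁.eq_or_lt with rfl | hu₁
    · simpa [hf₅] using hc
    rcases lt_trichotomy u (E / 2 ^ d) with hlt | rfl | hgt
    · rw [hf₁ u hu₀ hlt]
      exact densitySum_mem_Icc hd.ne' hE hu₀.le hlt.le
    · simpa [hf₄] using hc
    · obtain ⟨hf1, hf_le⟩ := hupper u ⟨hgt, hu₁⟩
      refine ⟨hf1 ▸ zero_le_one, hf_le.trans ?_⟩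
      gcongr
      exact div_le_div_of_nonneg_right (by norm_cast; omega) (by positivity)
  exact ⟨fun u hu => (hbound u hu).1,
    ⟨c₃, by positivity, fun u hu => (hbound u hu).2⟩, hupper⟩
end
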